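/- arXiv:2002.03458 — 2 statements merged into one kernel-verified Lean document; each statement's English description precedes it below -/
import Mathlib

section
/- Fix λ > 0 and an integer L ≥ 1, and write q_0 = e^{−λ}, q_1 = λe^{−λ}. Under independent Poisson(λ) arrivals per level, the probability that the channel is idle — i.e., the probability of the event { there exists j ∈ {1,…,L} with k_j = 0 and k_{j'} ≤ 1 for all j' < j } — equals (q_0 + q_1)^L − q_1^L + (1 − q_0 − q_1) · Σ_{i=2}^L [ (q_0 + q_1)^{i−1} − q_1^{i−1} ] (Theorem 4, equation (8)). -/
/-- Poisson probability weight of an arrival configuration `k : Fin L → ℕ`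
(independent Poisson(λ) arrivals per power level). -/
noncomputable def poissonWeight (L : ℕ) (lam : ℝ) (k : Fin L → ℕ) : ℝ :=
  ∏ m, lam ^ (k m) * Real.exp (-lam) / (Nat.factorial (k m))

/-! A configuration is idle exactly when the first level not holding exactly one packet is
empty. Splitting on the count of the first level gives the recursion `I_{L+1} = q₀ + q₁ I_L`
for the idle probability (the remaining levels carry total mass `1`), so
`I_L = q₀ ∑_{j<L} q₁ ^ j`; equation (8) is an algebraic rewriting of this geometric sum. -/

open Finset

lemma hasSum_ite_fst {α β M : Type*} [DecidableEq α] [AddCommMonoid M] [TopologicalSpace M]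
    {f : β → M} {t : M} (a : α) (hf : HasSum f t) :
    HasSum (fun x : α × β ↦ if x.1 = a then f x.2 else 0) t := by
  refine ((Prod.mk_right_injective a).hasSum_iff ?_).mp (by simpa [Function.comp_def] using hf)
  rintro ⟨b, y⟩ hx
  have hb : b ≠ a := by rintro rfl; exact hx ⟨y, rfl⟩
  simp [hb]

def idleSet (L : ℕ) : Set (Fin L → ℕ) :=
  {k | ∃ j : Fin L, k j = 0 ∧ ∀ j', j' < j → k j' ≤ 1}

lemma idleSet_zero : idleSet 0 = ∅ := by
  ext k; simp [idleSet]

lemma cons_mem_idleSet_iff {L : ℕ} (n : ℕ) (k : Fin L → ℕ) :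
    (Fin.cons n k : Fin (L + 1) → ℕ) ∈ idleSet (L + 1) ↔ n = 0 ∨ n = 1 ∧ k ∈ idleSet L := by
  rcases n with _ | _ | n <;>
    simp [idleSet, Fin.exists_fin_succ, Fin.forall_fin_succ, Fin.succ_lt_succ_iff]

section ProductWeight

variable {𝕜 : Type*} [NormedField 𝕜] {p : ℕ → 𝕜}

def productWeight (p : ℕ → 𝕜) {L : ℕ} (k : Fin L → ℕ) : 𝕜 :=
  ∏ m, p (k m)

lemma productWeight_cons {L : ℕ} (n : ℕ) (k : Fin L → ℕ) :
    productWeight p (Fin.cons n k : Fin (L + 1) → ℕ) = p n * productWeight p k := by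
  simp [productWeight, Fin.prod_univ_succ]

lemma productWeight_consEquiv {L : ℕ} (x : ℕ × (Fin L → ℕ)) :
    productWeight p (Fin.consEquiv (fun _ ↦ ℕ) x) = p x.1 * productWeight p x.2 :=
  productWeight_cons x.1 x.2

lemma summable_norm_productWeight (hp : Summable (‖p ·‖)) :
    ∀ L, Summable fun k : Fin L → ℕ ↦ ‖productWeight p k‖
  | 0 => .of_finite
  | L + 1 => by
    rw [← (Fin.consEquiv fun _ ↦ ℕ).summable_iff]
    simpa only [Function.comp_def, productWeight_consEquiv, norm_mul] using
      hp.mul_of_nonneg (summable_norm_productWeight hp L) (fun _ ↦ norm_nonneg _)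
        (fun _ ↦ norm_nonneg _)

lemma hasSum_productWeight [CompleteSpace 𝕜] {s : 𝕜} (hp : HasSum p s)
    (hp' : Summable (‖p ·‖)) : ∀ L, HasSum (productWeight p : (Fin L → ℕ) → 𝕜) (s ^ L)
  | 0 => by simpa [productWeight] using hasSum_fintype (productWeight p : (Fin 0 → ℕ) → 𝕜)
  | L + 1 => by
    rw [← (Fin.consEquiv fun _ ↦ ℕ).hasSum_iff, pow_succ']
    simpa only [Function.comp_def, productWeight_consEquiv] using
      hp.mul (hasSum_productWeight hp hp' L)
        (summable_mul_of_summable_norm hp' (summable_norm_productWeight hp' L))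

lemma indicator_idleSet_cons {L : ℕ} (n : ℕ) (k : Fin L → ℕ) :
    (idleSet (L + 1)).indicator (productWeight p) (Fin.cons n k) =
      (if n = 0 then p 0 * productWeight p k else 0) +
        if n = 1 then p 1 * (idleSet L).indicator (productWeight p) k else 0 := by
  classical
  rcases n with _ | _ | n <;> simp [Set.indicator_apply, cons_mem_idleSet_iff, productWeight_cons]

lemma hasSum_indicator_idleSet [CompleteSpace 𝕜] (hp : HasSum p 1) (hp' : Summable (‖p ·‖)) :
    ∀ L, HasSum ((idleSet L).indicator (productWeight p)) (p 0 * ∑ j ∈ range L, p 1 ^ j)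
  | 0 => by simp [idleSet_zero]
  | L + 1 => by
    have h0 := hasSum_ite_fst 0 ((hasSum_productWeight hp hp' L).mul_left (p 0))
    have h1 := hasSum_ite_fst 1 ((hasSum_indicator_idleSet hp hp' L).mul_left (p 1))
    have hval : p 0 * 1 ^ L + p 1 * (p 0 * ∑ j ∈ range L, p 1 ^ j) =
        p 0 * ∑ j ∈ range (L + 1), p 1 ^ j := by
      rw [geom_sum_succ]
      ring
    rw [← (Fin.consEquiv fun _ ↦ ℕ).hasSum_iff, ← hval]
    exact (h0.add h1).congr_fun fun x ↦ indicator_idleSet_cons x.1 x.2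

end ProductWeight

lemma mul_geom_sum_eq_pow_sub_pow_add {R : Type*} [CommRing R] (a b : R) :
    ∀ L, a * ∑ j ∈ range L, b ^ j =
      (a + b) ^ L - b ^ L + (1 - a - b) * ∑ i ∈ Icc 2 L, ((a + b) ^ (i - 1) - b ^ (i - 1))
  | 0 => by simp
  | 1 => by simp
  | L + 2 => by
    rw [sum_range_succ, mul_add, mul_geom_sum_eq_pow_sub_pow_add a b (L + 1),
      sum_Icc_succ_top (show 2 ≤ L + 1 + 1 by omega)]
    simp only [Nat.add_sub_cancel]
    ring

noncomputable def poissonTerm (lam : ℝ) (n : ℕ) : ℝ :=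
  lam ^ n * Real.exp (-lam) / n.factorial

lemma poissonWeight_eq_productWeight (L : ℕ) (lam : ℝ) :
    poissonWeight L lam = productWeight (poissonTerm lam) :=
  rfl

lemma hasSum_poissonTerm (lam : ℝ) : HasSum (poissonTerm lam) 1 := by
  have h := (NormedSpace.expSeries_div_hasSum_exp lam).mul_right (Real.exp (-lam))
  rw [← Real.exp_eq_exp_ℝ, ← Real.exp_add, add_neg_cancel, Real.exp_zero] at h
  exact h.congr_fun fun n ↦ by simp only [poissonTerm]; ring

lemma summable_norm_poissonTerm (lam : ℝ) : Summable (‖poissonTerm lam ·‖) :=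
  ((Real.summable_pow_div_factorial |lam|).mul_right (Real.exp (-lam))).congr fun n ↦ by
    simp [poissonTerm, div_mul_eq_mul_div]

theorem stmt6_general (lam : ℝ) (L : ℕ) :
    ∑' k : {k : Fin L → ℕ // ∃ j : Fin L, k j = 0 ∧ ∀ j', j' < j → k j' ≤ 1},
        poissonWeight L lam k.1
    = (Real.exp (-lam) + lam * Real.exp (-lam)) ^ L
        - (lam * Real.exp (-lam)) ^ L
        + (1 - Real.exp (-lam) - lam * Real.exp (-lam)) *
          ∑ i ∈ Finset.Icc 2 L,
            ((Real.exp (-lam) + lam * Real.exp (-lam)) ^ (i - 1)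
              - (lam * Real.exp (-lam)) ^ (i - 1)) := by
  rw [poissonWeight_eq_productWeight]
  refine (tsum_subtype (idleSet L) _).trans ?_
  rw [(hasSum_indicator_idleSet (hasSum_poissonTerm lam) (summable_norm_poissonTerm lam) L).tsum_eq,
    mul_geom_sum_eq_pow_sub_pow_add]
  simp [poissonTerm]

/-- Theorem 4 (equation (8)): the probability that the channel is idle, i.e. that some
power level `j` is empty while all higher-power levels `j' < j` contain at most one
packet (so the empty level is observed before any power collision), equals
`(q₀+q₁)^L − q₁^L + (1 − q₀ − q₁)·Σ_{i=2}^L [(q₀+q₁)^{i−1} − q₁^{i−1}]`,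
where `q₀ = e^{−λ}` and `q₁ = λe^{−λ}`. -/
theorem stmt6 (lam : ℝ) (hlam : 0 < lam) (L : ℕ) (hL : 1 ≤ L) :
    ∑' k : {k : Fin L → ℕ // ∃ j : Fin L, k j = 0 ∧ ∀ j', j' < j → k j' ≤ 1},
        poissonWeight L lam k.1
    = (Real.exp (-lam) + lam * Real.exp (-lam)) ^ L
        - (lam * Real.exp (-lam)) ^ L
        + (1 - Real.exp (-lam) - lam * Real.exp (-lam)) *
          ∑ i ∈ Finset.Icc 2 L,
            ((Real.exp (-lam) + lam * Real.exp (-lam)) ^ (i - 1)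
              - (lam * Real.exp (-lam)) ^ (i - 1)) :=
  stmt6_general lam L
end

section
/- Fix λ > 0, an integer L ≥ 2, and a level i with 2 ≤ i ≤ L, and write q_0 = e^{−λ}, q_1 = λe^{−λ}. Under independent Poisson(λ) arrivals per level, the probability of the event { k_i ≥ 2, k_j ≤ 1 for all j < i, and k_j = 0 for at least one j < i } — i.e., that the first power collision occurs at level i and at least one idle level appears above it — equals (1 − q_0 − q_1) · [ (q_0 + q_1)^{i−1} − q_1^{i−1} ] (intermediate claim in the proof of Theorem 4, Appendix C). -/
open scoped ENNReal BigOperators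

namespace Stmt8Aux

/-- tsum over a finite pi type of a product of one-coordinate functions factors. -/
lemma tsum_pi_ennreal : ∀ (n : ℕ) (g : Fin n → ℕ → ℝ≥0∞),
    ∑' k : Fin n → ℕ, ∏ m, g m (k m) = ∏ m, ∑' j, g m j := by
  intro n
  induction n with
  | zero =>
      intro g
      rw [tsum_eq_single (fun m => m.elim0)
        (fun b hb => absurd (funext fun m => m.elim0) hb)]
      simp
  | succ n ih =>
      intro g
      let e : ℕ × (Fin n → ℕ) ≃ (Fin (n + 1) → ℕ) :=
        { toFun := fun p => Fin.cons p.1 p.2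
          invFun := fun k => (k 0, fun m => k m.succ)
          left_inv := by intro p; simp
          right_inv := by
            intro k; funext m
            refine Fin.cases ?_ ?_ m <;> simp }
      rw [← e.tsum_eq]
      have : ∀ p : ℕ × (Fin n → ℕ),
          (∏ m, g m (e p m)) = g 0 p.1 * ∏ m : Fin n, g m.succ (p.2 m) := by
        intro p
        rw [Fin.prod_univ_succ]
        simp [e]
      simp_rw [this]
      rw [ENNReal.tsum_prod']
      simp_rw [ENNReal.tsum_mul_left, ENNReal.tsum_mul_right]
      rw [ih, Fin.prod_univ_succ]

lemma prod_split {L : ℕ} (i : Fin L) (t : Fin L → ℝ≥0∞)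
    (h1 : ∀ m, m ≠ i → ¬ m < i → t m = 1) :
    ∏ m, t m = t i * ∏ m ∈ Finset.Iio i, t m := by
  have hsub : insert i (Finset.Iio i) ⊆ Finset.univ := Finset.subset_univ _
  rw [← Finset.prod_subset hsub (fun x _ hx => by
    simp only [Finset.mem_insert, Finset.mem_Iio] at hx
    push_neg at hx
    exact h1 x hx.1 (by simpa using hx.2))]
  rw [Finset.prod_insert (by simp)]

end Stmt8Aux

/-- Appendix C (proof of Theorem 4): for a level `i` (Lean index `i : Fin L` with
`1 ≤ i`, corresponding to the paper's level `i+1 ∈ {2,…,L}`), the probability that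
the first power collision occurs at level `i` (i.e. `k i ≥ 2` and `k j ≤ 1` for all
`j < i`) and at least one idle level appears above it (`k j = 0` for some `j < i`)
equals `(1 − q₀ − q₁)·[(q₀+q₁)^i − q₁^i]`, where `q₀ = e^{−λ}`, `q₁ = λe^{−λ}`,
and the Lean exponent `i` equals the paper's `i − 1`. -/
theorem stmt8 (lam : ℝ) (hlam : 0 < lam) (L : ℕ) (hL : 2 ≤ L) (i : Fin L)
    (hi : 1 ≤ (i : ℕ)) :
    ∑' k : {k : Fin L → ℕ //
        2 ≤ k i ∧ (∀ j, j < i → k j ≤ 1) ∧ ∃ j, j < i ∧ k j = 0},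
        poissonWeight L lam k.1
    = (1 - Real.exp (-lam) - lam * Real.exp (-lam)) *
        ((Real.exp (-lam) + lam * Real.exp (-lam)) ^ (i : ℕ)
          - (lam * Real.exp (-lam)) ^ (i : ℕ)) := by
  classical
  -- single-coordinate Poisson weight
  set P : ℕ → ℝ := fun n => lam ^ n * Real.exp (-lam) / (Nat.factorial n) with hPdef
  have hP0 : ∀ n, 0 ≤ P n := fun n => by
    have := Real.exp_pos (-lam)
    positivity
  have hPsum : Summable P := by
    refine ((Real.summable_pow_div_factorial lam).mul_right
      (Real.exp (-lam))).congr fun n => ?_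
    simp [hPdef]; ring
  have htP : ∑' n, P n = 1 := by
    have h1 : ∑' n : ℕ, lam ^ n / (Nat.factorial n) = Real.exp lam := by
      rw [Real.exp_eq_exp_ℝ, NormedSpace.exp_eq_tsum_div]
    calc ∑' n, P n = (∑' n : ℕ, lam ^ n / (Nat.factorial n)) * Real.exp (-lam) := by
          rw [← tsum_mul_right]; exact tsum_congr fun n => by simp [hPdef]; ring
      _ = 1 := by rw [h1, ← Real.exp_add]; simp
  -- abbreviations
  set q0 : ℝ := P 0 with hq0
  set q1 : ℝ := P 1 with hq1
  have hq0v : q0 = Real.exp (-lam) := by simp [hq0, hPdef]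
  have hq1v : q1 = lam * Real.exp (-lam) := by simp [hq1, hPdef]
  have hq0pos : 0 < q0 := by rw [hq0v]; exact Real.exp_pos _
  have hq1nn : 0 ≤ q1 := hP0 1
  have hc : 0 ≤ 1 - q0 - q1 := by
    rw [hq0v, hq1v]
    have h := Real.add_one_le_exp lam
    have hexp : Real.exp (-lam) * (lam + 1) ≤ Real.exp (-lam) * Real.exp lam :=
      mul_le_mul_of_nonneg_left h (Real.exp_pos _).le
    rw [← Real.exp_add] at hexp
    simp only [neg_add_cancel, Real.exp_zero] at hexp
    nlinarith
  have hsnn : 0 ≤ q0 + q1 := by positivity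
  -- ENNReal single-coordinate functions
  set q : ℕ → ℝ≥0∞ := fun n => ENNReal.ofReal (P n) with hq
  set glo : ℕ → ℝ≥0∞ := fun n => if n ≤ 1 then q n else 0 with hglo
  set gone : ℕ → ℝ≥0∞ := fun n => if n = 1 then q n else 0 with hgone
  set ghi : ℕ → ℝ≥0∞ := fun n => if 2 ≤ n then q n else 0 with hghi
  have Tfull : ∑' n, q n = 1 := by
    rw [hq, ← ENNReal.ofReal_tsum_of_nonneg hP0 hPsum, htP, ENNReal.ofReal_one]
  have Tlo : ∑' n, glo n = ENNReal.ofReal (q0 + q1) := by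
    rw [tsum_eq_sum (s := {0, 1}) (by
      intro b hb
      simp only [Finset.mem_insert, Finset.mem_singleton] at hb
      push_neg at hb
      have : ¬ b ≤ 1 := by omega
      simp [hglo, this])]
    rw [Finset.sum_pair (by norm_num)]
    simp [hglo, hq, ENNReal.ofReal_add (hP0 0) (hP0 1), hq0, hq1]
  have Tone : ∑' n, gone n = ENNReal.ofReal q1 := by
    rw [tsum_eq_single 1 (by intro b hb; simp [hgone, hb])]
    simp [hgone, hq, hq1]
  have Thi : ∑' n, ghi n = ENNReal.ofReal (1 - q0 - q1) := by
    have hsplit : ∀ n, q n = glo n + ghi n := by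
      intro n
      by_cases h : n ≤ 1
      · have h2 : ¬ 2 ≤ n := by omega
        simp [hglo, hghi, h, h2]
      · have h2 : 2 ≤ n := by omega
        simp [hglo, hghi, h, h2]
    have hadd : (1 : ℝ≥0∞) = ENNReal.ofReal (q0 + q1) + ∑' n, ghi n := by
      rw [← Tlo, ← ENNReal.tsum_add, ← Tfull]
      exact tsum_congr hsplit
    have hne : ENNReal.ofReal (q0 + q1) ≠ ∞ := ENNReal.ofReal_ne_top
    have := ENNReal.eq_sub_of_add_eq hne (a := ∑' n, ghi n)
      (b := 1) (by rw [add_comm]; exact hadd.symm)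
    rw [this, ← ENNReal.ofReal_one, ← ENNReal.ofReal_sub _ hsnn]
    ring_nf
  -- weight in ENNReal
  set W : (Fin L → ℕ) → ℝ≥0∞ := fun k => ∏ m, q (k m) with hW
  have hWeq : ∀ k, W k = ENNReal.ofReal (poissonWeight L lam k) := by
    intro k
    rw [hW, poissonWeight, ENNReal.ofReal_prod_of_nonneg (fun m _ => hP0 (k m))]
  -- event sets
  set A : Set (Fin L → ℕ) := {k | 2 ≤ k i ∧ ∀ j, j < i → k j ≤ 1} with hA
  set B : Set (Fin L → ℕ) := {k | 2 ≤ k i ∧ ∀ j, j < i → k j = 1} with hB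
  set E : Set (Fin L → ℕ) :=
    {k | 2 ≤ k i ∧ (∀ j, j < i → k j ≤ 1) ∧ ∃ j, j < i ∧ k j = 0} with hE
  -- product forms for indicators
  set gA : Fin L → ℕ → ℝ≥0∞ :=
    fun m => if m = i then ghi else if m < i then glo else q with hgA
  set gB : Fin L → ℕ → ℝ≥0∞ :=
    fun m => if m = i then ghi else if m < i then gone else q with hgB
  have hindA : ∀ k, A.indicator W k = ∏ m, gA m (k m) := by
    intro k
    by_cases hk : k ∈ A
    · rw [Set.indicator_of_mem hk]
      refine Finset.prod_congr rfl fun m _ => ?_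
      by_cases hmi : m = i
      · subst hmi
        simp [hgA, hghi, hk.1]
      · by_cases hlt : m < i
        · simp [hgA, hmi, hlt, hglo, hk.2 m hlt]
        · simp [hgA, hmi, hlt]
    · rw [Set.indicator_of_notMem hk]
      rw [hA] at hk
      simp only [Set.mem_setOf_eq, not_and_or, not_forall] at hk
      rcases hk with hk | hk
      · refine (Finset.prod_eq_zero (Finset.mem_univ i) ?_).symm
        simp [hgA, hghi, hk]
      · obtain ⟨j, hj, hkj⟩ := hk
        have hne : j ≠ i := ne_of_lt hj
        refine (Finset.prod_eq_zero (Finset.mem_univ j) ?_).symm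
        have : ¬ k j ≤ 1 := by omega
        simp [hgA, hne, hj, hglo, this]
  have hindB : ∀ k, B.indicator W k = ∏ m, gB m (k m) := by
    intro k
    by_cases hk : k ∈ B
    · rw [Set.indicator_of_mem hk]
      refine Finset.prod_congr rfl fun m _ => ?_
      by_cases hmi : m = i
      · subst hmi
        simp [hgB, hghi, hk.1]
      · by_cases hlt : m < i
        · simp [hgB, hmi, hlt, hgone, hk.2 m hlt]
        · simp [hgB, hmi, hlt]
    · rw [Set.indicator_of_notMem hk]
      rw [hB] at hk
      simp only [Set.mem_setOf_eq, not_and_or, not_forall] at hk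
      rcases hk with hk | hk
      · refine (Finset.prod_eq_zero (Finset.mem_univ i) ?_).symm
        simp [hgB, hghi, hk]
      · obtain ⟨j, hj, hkj⟩ := hk
        have hne : j ≠ i := ne_of_lt hj
        refine (Finset.prod_eq_zero (Finset.mem_univ j) ?_).symm
        simp [hgB, hne, hj, hgone, hkj]
  -- values of the product sums
  have hcardIio : (Finset.Iio i).card = (i : ℕ) := Fin.card_Iio i
  have SAval : ∑' k : Fin L → ℕ, A.indicator W k
      = ENNReal.ofReal (1 - q0 - q1) * ENNReal.ofReal (q0 + q1) ^ (i : ℕ) := by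
    simp_rw [hindA]
    rw [Stmt8Aux.tsum_pi_ennreal L gA]
    rw [Stmt8Aux.prod_split i _ (fun m hne hnlt => by simp [hgA, hne, hnlt, Tfull])]
    have h1 : (if i = i then ghi else if i < i then glo else q) = ghi := by simp
    have h2 : ∏ m ∈ Finset.Iio i, ∑' j, gA m j
        = ENNReal.ofReal (q0 + q1) ^ (i : ℕ) := by
      rw [Finset.prod_congr rfl (fun m hm => by
        have hlt : m < i := Finset.mem_Iio.mp hm
        have hne : m ≠ i := ne_of_lt hlt
        simp only [hgA, if_neg hne, if_pos hlt]
        exact Tlo)]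
      rw [Finset.prod_const, hcardIio]
    rw [h2]
    simp only [hgA, if_pos rfl]
    rw [Thi]
  have SBval : ∑' k : Fin L → ℕ, B.indicator W k
      = ENNReal.ofReal (1 - q0 - q1) * ENNReal.ofReal q1 ^ (i : ℕ) := by
    simp_rw [hindB]
    rw [Stmt8Aux.tsum_pi_ennreal L gB]
    rw [Stmt8Aux.prod_split i _ (fun m hne hnlt => by simp [hgB, hne, hnlt, Tfull])]
    have h2 : ∏ m ∈ Finset.Iio i, ∑' j, gB m j
        = ENNReal.ofReal q1 ^ (i : ℕ) := by
      rw [Finset.prod_congr rfl (fun m hm => by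
        have hlt : m < i := Finset.mem_Iio.mp hm
        have hne : m ≠ i := ne_of_lt hlt
        simp only [hgB, if_neg hne, if_pos hlt]
        exact Tone)]
      rw [Finset.prod_const, hcardIio]
    rw [h2]
    simp only [hgB, if_pos rfl]
    rw [Thi]
  -- A decomposes as E ⊔ B
  have hdecomp : ∀ k, A.indicator W k = E.indicator W k + B.indicator W k := by
    intro k
    by_cases hkA : k ∈ A
    · by_cases hkB : k ∈ B
      · have hkE : k ∉ E := by
          rw [hE]
          simp only [Set.mem_setOf_eq, not_and_or, not_exists]
          right; right
          intro j
          by_cases hj : j < i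
          · right; have := hkB.2 j hj; omega
          · left; exact hj
        rw [Set.indicator_of_mem hkA, Set.indicator_of_mem hkB,
          Set.indicator_of_notMem hkE, zero_add]
      · have hkE : k ∈ E := by
          rw [hB] at hkB
          simp only [Set.mem_setOf_eq, not_and_or, not_forall] at hkB
          rcases hkB with h | ⟨j, hj, hkj⟩
          · exact absurd hkA.1 h
          · refine ⟨hkA.1, hkA.2, j, hj, ?_⟩
            have := hkA.2 j hj
            omega
        rw [Set.indicator_of_mem hkA, Set.indicator_of_mem hkE,
          Set.indicator_of_notMem hkB, add_zero]
    · have hkE : k ∉ E := fun h => hkA ⟨h.1, h.2.1⟩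
      have hkB : k ∉ B := fun h => hkA ⟨h.1, fun j hj => le_of_eq (h.2 j hj)⟩
      rw [Set.indicator_of_notMem hkA, Set.indicator_of_notMem hkE,
        Set.indicator_of_notMem hkB, add_zero]
  -- value of the sum over E in ℝ≥0∞
  have SEval : ∑' k : Fin L → ℕ, E.indicator W k
      = ENNReal.ofReal ((1 - q0 - q1) * ((q0 + q1) ^ (i : ℕ) - q1 ^ (i : ℕ))) := by
    have hadd : (∑' k : Fin L → ℕ, E.indicator W k)
        + ∑' k : Fin L → ℕ, B.indicator W k
        = ENNReal.ofReal (1 - q0 - q1) * ENNReal.ofReal (q0 + q1) ^ (i : ℕ) := by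
      rw [← SAval, ← ENNReal.tsum_add]
      exact (tsum_congr hdecomp).symm
    rw [SBval] at hadd
    have hne : ENNReal.ofReal (1 - q0 - q1) * ENNReal.ofReal q1 ^ (i : ℕ) ≠ ∞ :=
      ENNReal.mul_ne_top ENNReal.ofReal_ne_top (ENNReal.pow_ne_top ENNReal.ofReal_ne_top)
    have h := ENNReal.eq_sub_of_add_eq hne hadd
    rw [h]
    rw [← ENNReal.ofReal_pow hsnn, ← ENNReal.ofReal_pow hq1nn,
      ← ENNReal.ofReal_mul hc, ← ENNReal.ofReal_mul hc,
      ← ENNReal.ofReal_sub _ (by positivity)]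
    ring_nf
  -- back to ℝ
  set w : (Fin L → ℕ) → ℝ := poissonWeight L lam with hw
  have hwnn : ∀ k, 0 ≤ w k := fun k =>
    Finset.prod_nonneg fun m _ => hP0 (k m)
  have hWind : ∀ k, E.indicator W k = ENNReal.ofReal (E.indicator w k) := by
    intro k
    by_cases h : k ∈ E
    · rw [Set.indicator_of_mem h, Set.indicator_of_mem h, hWeq]
    · rw [Set.indicator_of_notMem h, Set.indicator_of_notMem h, ENNReal.ofReal_zero]
  have hindnn : ∀ k, 0 ≤ E.indicator w k := fun k =>
    Set.indicator_nonneg (fun x _ => hwnn x) k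
  have hsumm : Summable (E.indicator w) := by
    refine (ENNReal.summable_toReal (f := fun k => E.indicator W k) ?_).congr fun k => ?_
    · rw [SEval]; exact ENNReal.ofReal_ne_top
    · rw [hWind k, ENNReal.toReal_ofReal (hindnn k)]
  have hofReal : ENNReal.ofReal (∑' k, E.indicator w k)
      = ENNReal.ofReal ((1 - q0 - q1) * ((q0 + q1) ^ (i : ℕ) - q1 ^ (i : ℕ))) := by
    rw [ENNReal.ofReal_tsum_of_nonneg hindnn hsumm, ← SEval]
    exact tsum_congr fun k => (hWind k).symm
  have htargetnn : 0 ≤ (1 - q0 - q1) * ((q0 + q1) ^ (i : ℕ) - q1 ^ (i : ℕ)) := by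
    have h1 : q1 ^ (i : ℕ) ≤ (q0 + q1) ^ (i : ℕ) :=
      pow_le_pow_left₀ hq1nn (by linarith) _
    have h2 : (0:ℝ) ≤ (q0 + q1) ^ (i : ℕ) - q1 ^ (i : ℕ) := by linarith
    exact mul_nonneg hc h2
  have hfinal : ∑' k, E.indicator w k
      = (1 - q0 - q1) * ((q0 + q1) ^ (i : ℕ) - q1 ^ (i : ℕ)) :=
    (ENNReal.ofReal_eq_ofReal_iff (tsum_nonneg hindnn) htargetnn).mp hofReal
  have hsub : ∑' k : {k : Fin L → ℕ //
        2 ≤ k i ∧ (∀ j, j < i → k j ≤ 1) ∧ ∃ j, j < i ∧ k j = 0},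
      poissonWeight L lam k.1 = ∑' k, E.indicator w k := tsum_subtype E w
  rw [hsub, hfinal, hq0v, hq1v]
end
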